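/- arXiv:2206.01183 — 3 statements merged into one kernel-verified Lean document; each statement's English description precedes it below -/
import Mathlib

section
/- Let M be a semi-Riemannian manifold, K a generalized curvature tensor (a (0,4)-tensor satisfying K(X₁,X₂,X₃,X₄) = -K(X₂,X₁,X₃,X₄) = -K(X₁,X₂,X₄,X₃) = K(X₃,X₄,X₁,X₂) and the first Bianchi identity), and A a 1-form. If A(X₁)K(X₂,X₅,X₃,X₄) + A(X₂)K(X₁,X₅,X₃,X₄) = 0 for all vector fields X₁,X₂,X₃,X₄,X₅, then either A = 0 or K = 0. -/
/-- Lemma 3.1: if `A(X₁)K(X₂,X₅,X₃,X₄) + A(X₂)K(X₁,X₅,X₃,X₄) = 0` for a generalized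
curvature tensor `K` on a finite-dimensional space with a nondegenerate bilinear form,
then `A = 0` or `K = 0`. -/
theorem extended_ws_lemma31
    {V : Type*} [AddCommGroup V] [Module ℝ V] [FiniteDimensional ℝ V]
    (g : LinearMap.BilinForm ℝ V) (hg : g.Nondegenerate)
    (K : V →ₗ[ℝ] V →ₗ[ℝ] V →ₗ[ℝ] V →ₗ[ℝ] ℝ)
    (hK1 : ∀ a b c d : V, K a b c d = - K b a c d)
    (hK2 : ∀ a b c d : V, K a b c d = - K a b d c)
    (hK3 : ∀ a b c d : V, K a b c d = K c d a b)
    (hK4 : ∀ a b c d : V, K a b c d + K b c a d + K c a b d = 0)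
    (A : V →ₗ[ℝ] ℝ)
    (h : ∀ x1 x2 x3 x4 x5 : V,
      A x1 * K x2 x5 x3 x4 + A x2 * K x1 x5 x3 x4 = 0) :
    A = 0 ∨ K = 0 := by
  by_cases hA : A = 0
  · exact Or.inl hA
  · right
    obtain ⟨v, hv⟩ : ∃ v, A v ≠ 0 := by
      by_contra hc
      push_neg at hc
      exact hA (LinearMap.ext fun x => hc x)
    have hKv : ∀ b c d, K v b c d = 0 := by
      intro b c d
      have := h v v c d b
      have h2 : A v * (K v b c d + K v b c d) = 0 := by ring_nf; ring_nf at this; linarith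
      rcases mul_eq_zero.mp h2 with h3 | h3
      · exact absurd h3 hv
      · linarith
    ext a b c d
    have := h a v c d b
    rw [hKv b c d, mul_zero, zero_add] at this
    rcases mul_eq_zero.mp this with h3 | h3
    · exact absurd h3 hv
    · simpa using h3
end

section
/- Let M be a Riemannian manifold satisfying the reduced extended weakly symmetric equation (3.1). Substituting into the second Bianchi identity (∇_{X₅}R)(X₁,X₂,X₃,X₄) + (∇_{X₁}R)(X₂,X₅,X₃,X₄) + (∇_{X₂}R)(X₅,X₁,X₃,X₄) = 0 yields: ω(X₅)G(X₁,X₂,X₃,X₄) + ω(X₂)G(X₅,X₁,X₃,X₄) + ω(X₁)G(X₂,X₅,X₃,X₄) + δ(X₅)H(X₁,X₂,X₃,X₄) + δ(X₂)H(X₅,X₁,X₃,X₄) + δ(X₁)H(X₂,X₅,X₃,X₄) + J(X₅)R(X₁,X₂,X₃,X₄) + J(X₂)R(X₅,X₁,X₃,X₄) + J(X₁)R(X₂,X₅,X₃,X₄) = 0, where J = A - 2B, δ = α - 2β, ω = θ - 2φ. -/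
noncomputable section

/-- The wedge product of two (0,2)-tensors used in the paper. -/
def wedge {V : Type*} (q p : V → V → ℝ) (x1 x2 x3 x4 : V) : ℝ :=
  q x1 x4 * p x2 x3 - q x1 x3 * p x2 x4 + p x1 x4 * q x2 x3 - p x1 x3 * q x2 x4

variable {V : Type*} [NormedAddCommGroup V] [InnerProductSpace ℝ V] [FiniteDimensional ℝ V]

/-- The metric, as a real-valued bilinear function. -/
def gf (x y : V) : ℝ := inner ℝ x y

/-- The symmetries of a generalized (algebraic) curvature tensor. -/
def IsACT (R : V →ₗ[ℝ] V →ₗ[ℝ] V →ₗ[ℝ] V →ₗ[ℝ] ℝ) : Prop :=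
  (∀ a b c d, R a b c d = - R b a c d) ∧
  (∀ a b c d, R a b c d = - R a b d c) ∧
  (∀ a b c d, R a b c d = R c d a b) ∧
  (∀ a b c d, R a b c d + R b c a d + R c a b d = 0)

/-- Ricci tensor: metric contraction of `R` over the first and fourth arguments. -/
def ricci (R : V →ₗ[ℝ] V →ₗ[ℝ] V →ₗ[ℝ] V →ₗ[ℝ] ℝ) (x y : V) : ℝ :=
  ∑ i, R (stdOrthonormalBasis ℝ V i) x y (stdOrthonormalBasis ℝ V i)

/-- Scalar curvature: trace of the Ricci tensor. -/
def scal (R : V →ₗ[ℝ] V →ₗ[ℝ] V →ₗ[ℝ] V →ₗ[ℝ] ℝ) : ℝ :=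
  ∑ i, ricci R (stdOrthonormalBasis ℝ V i) (stdOrthonormalBasis ℝ V i)

/-- Ricci operator `L`, characterized by `g(L x, y) = S(x, y)`. -/
def ricOp (R : V →ₗ[ℝ] V →ₗ[ℝ] V →ₗ[ℝ] V →ₗ[ℝ] ℝ) (x : V) : V :=
  ∑ i, ricci R x (stdOrthonormalBasis ℝ V i) • stdOrthonormalBasis ℝ V i

/-- Curvature operator: `g(R(x,y)z, w) = R(x,y,z,w)`. -/
def curvOp (R : V →ₗ[ℝ] V →ₗ[ℝ] V →ₗ[ℝ] V →ₗ[ℝ] ℝ) (x y z : V) : V :=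
  ∑ i, R x y z (stdOrthonormalBasis ℝ V i) • stdOrthonormalBasis ℝ V i

/-- Metric dual vector field of a 1-form. -/
def dualVec (A : V →ₗ[ℝ] ℝ) : V :=
  ∑ i, A (stdOrthonormalBasis ℝ V i) • stdOrthonormalBasis ℝ V i

/-!
Each of the three groups of terms in (3.1) has the shape
`a(X₅) T(X₁,X₂,X₃,X₄) + b(X₁) T(X₅,X₂,X₃,X₄) + … + b(X₄) T(X₁,X₂,X₃,X₅)`
with `T ∈ {R, H, G}`, and each of these tensors is skew in both pairs and satisfies the first
Bianchi identity. Summing cyclically over `(X₅, X₁, X₂)`, the `b(X₃)` and `b(X₄)` terms cancel by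
the first Bianchi identity, while the `b(X₁)`, `b(X₂)`, `b(X₅)` terms each appear twice and are
turned by skew-symmetry into `-2 b` times the coefficients of the `a`-terms.
-/

section CurvatureLike

variable {E : Type*}

structure IsCurvatureLike (T : E → E → E → E → ℝ) : Prop where
  antisymm_left : ∀ a b c d, T b a c d = -T a b c d
  antisymm_right : ∀ a b c d, T a b d c = -T a b c d
  cyclic : ∀ a b c d, T a b c d + T b c a d + T c a b d = 0

theorem wedge_isCurvatureLike {q p : E → E → ℝ} (hq : ∀ a b, q a b = q b a)
    (hp : ∀ a b, p a b = p b a) : IsCurvatureLike (wedge q p) where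
  antisymm_left a b c d := by unfold wedge; ring
  antisymm_right a b c d := by unfold wedge; ring
  cyclic a b c d := by
    unfold wedge
    rw [hq c a, hp c a, hq b a, hp b a, hq c b, hp c b]
    ring

/-- The shape of each group of terms on the right-hand side of (3.1), once `D = B`. -/
def ewsTerm (a b : E → ℝ) (T : E → E → E → E → ℝ) (x5 x1 x2 x3 x4 : E) : ℝ :=
  a x5 * T x1 x2 x3 x4 + b x1 * T x5 x2 x3 x4 + b x2 * T x1 x5 x3 x4
    + b x3 * T x1 x2 x5 x4 + b x4 * T x1 x2 x3 x5

theorem IsCurvatureLike.ewsTerm_cyclic_sum {T : E → E → E → E → ℝ} (hT : IsCurvatureLike T)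
    (a b : E → ℝ) (x1 x2 x3 x4 x5 : E) :
    ewsTerm a b T x5 x1 x2 x3 x4 + ewsTerm a b T x1 x2 x5 x3 x4 + ewsTerm a b T x2 x5 x1 x3 x4 =
      (a x5 - 2 * b x5) * T x1 x2 x3 x4 + (a x2 - 2 * b x2) * T x5 x1 x3 x4
        + (a x1 - 2 * b x1) * T x2 x5 x3 x4 := by
  obtain ⟨skewL, skewR, cyc⟩ := hT
  unfold ewsTerm
  linear_combination 2 * b x1 * skewL x2 x5 x3 x4 + 2 * b x2 * skewL x5 x1 x3 x4
    + 2 * b x5 * skewL x1 x2 x3 x4 + b x3 * cyc x1 x2 x5 x4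
    + b x4 * (skewR x1 x2 x5 x3 + skewR x2 x5 x1 x3 + skewR x5 x1 x2 x3 - cyc x1 x2 x5 x3)

end CurvatureLike

section InnerProductSpace

variable {W : Type*} [NormedAddCommGroup W] [InnerProductSpace ℝ W]

theorem IsACT.isCurvatureLike {R : W →ₗ[ℝ] W →ₗ[ℝ] W →ₗ[ℝ] W →ₗ[ℝ] ℝ} (hR : IsACT R) :
    IsCurvatureLike fun a b c d => R a b c d where
  antisymm_left a b c d := by rw [hR.1 b a c d]
  antisymm_right a b c d := by rw [hR.2.1 a b d c]
  cyclic := hR.2.2.2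

theorem gf_comm (x y : W) : gf x y = gf y x := real_inner_comm y x

end InnerProductSpace

theorem IsACT.ricci_comm {R : V →ₗ[ℝ] V →ₗ[ℝ] V →ₗ[ℝ] V →ₗ[ℝ] ℝ} (hR : IsACT R) (x y : V) :
    ricci R x y = ricci R y x := by
  obtain ⟨skewL, skewR, pairSymm, -⟩ := hR
  refine Finset.sum_congr rfl fun i _ => ?_
  set e := stdOrthonormalBasis ℝ V i
  rw [pairSymm e x y e, skewL y e e x, skewR e y e x, neg_neg]

/-- Substituting the reduced extended weakly symmetric equation (3.1) into the second
Bianchi identity yields the identity (3.4) with `J = A-2B`, `δ = α-2β`, `ω = θ-2φ`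
(using the equalities `D = B`, `γ = β`, `ψ = φ`). -/
theorem extended_ws_second_bianchi
    (R : V →ₗ[ℝ] V →ₗ[ℝ] V →ₗ[ℝ] V →ₗ[ℝ] ℝ) (hR : IsACT R)
    (dR : V →ₗ[ℝ] V →ₗ[ℝ] V →ₗ[ℝ] V →ₗ[ℝ] V →ₗ[ℝ] ℝ)
    (hBianchi : ∀ x1 x2 x3 x4 x5 : V,
      dR x5 x1 x2 x3 x4 + dR x1 x2 x5 x3 x4 + dR x2 x5 x1 x3 x4 = 0)
    (A B D al be ga th ph ps : V →ₗ[ℝ] ℝ)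
    (hEWS : ∀ x1 x2 x3 x4 x5 : V,
      dR x5 x1 x2 x3 x4 =
        A x5 * R x1 x2 x3 x4 + B x1 * R x5 x2 x3 x4 + B x2 * R x1 x5 x3 x4
          + D x3 * R x1 x2 x5 x4 + D x4 * R x1 x2 x3 x5
          + al x5 * wedge gf (ricci R) x1 x2 x3 x4
          + be x1 * wedge gf (ricci R) x5 x2 x3 x4
          + be x2 * wedge gf (ricci R) x1 x5 x3 x4
          + ga x3 * wedge gf (ricci R) x1 x2 x5 x4
          + ga x4 * wedge gf (ricci R) x1 x2 x3 x5
          + th x5 * wedge gf gf x1 x2 x3 x4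
          + ph x1 * wedge gf gf x5 x2 x3 x4
          + ph x2 * wedge gf gf x1 x5 x3 x4
          + ps x3 * wedge gf gf x1 x2 x5 x4
          + ps x4 * wedge gf gf x1 x2 x3 x5)
    (hDB : D = B) (hgabe : ga = be) (hpsph : ps = ph) :
    ∀ x1 x2 x3 x4 x5 : V,
      (th x5 - 2 * ph x5) * wedge gf gf x1 x2 x3 x4
        + (th x2 - 2 * ph x2) * wedge gf gf x5 x1 x3 x4
        + (th x1 - 2 * ph x1) * wedge gf gf x2 x5 x3 x4
        + (al x5 - 2 * be x5) * wedge gf (ricci R) x1 x2 x3 x4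
        + (al x2 - 2 * be x2) * wedge gf (ricci R) x5 x1 x3 x4
        + (al x1 - 2 * be x1) * wedge gf (ricci R) x2 x5 x3 x4
        + (A x5 - 2 * B x5) * R x1 x2 x3 x4
        + (A x2 - 2 * B x2) * R x5 x1 x3 x4
        + (A x1 - 2 * B x1) * R x2 x5 x3 x4 = 0 := by
  subst D ga ps
  intro x1 x2 x3 x4 x5
  have hG := wedge_isCurvatureLike (E := V) gf_comm gf_comm
  have hS := wedge_isCurvatureLike gf_comm hR.ricci_comm
  have dR_eq : ∀ y5 y1 y2 y3 y4 : V, dR y5 y1 y2 y3 y4 =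
      ewsTerm A B (fun a b c d => R a b c d) y5 y1 y2 y3 y4
        + ewsTerm al be (wedge gf (ricci R)) y5 y1 y2 y3 y4
        + ewsTerm th ph (wedge gf gf) y5 y1 y2 y3 y4 := by
    intro y5 y1 y2 y3 y4
    rw [hEWS]
    unfold ewsTerm
    ring
  have bianchi := hBianchi x1 x2 x3 x4 x5
  rw [dR_eq, dR_eq, dR_eq] at bianchi
  linear_combination bianchi - hR.isCurvatureLike.ewsTerm_cyclic_sum A B x1 x2 x3 x4 x5
    - hS.ewsTerm_cyclic_sum al be x1 x2 x3 x4 x5 - hG.ewsTerm_cyclic_sum th ph x1 x2 x3 x4 x5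
end
end

section
/- Let V be an n-dimensional real inner product space and R an algebraic curvature tensor on V. If there exist a nonzero linear functional A such that A(X₁)R(X₂,X₅,X₃,X₄) + A(X₂)R(X₁,X₅,X₃,X₄) = 0 for all vectors, then R = 0. (Algebraic pointwise version of Lemma 3.1.) -/
noncomputable section

variable {V : Type*} [NormedAddCommGroup V] [InnerProductSpace ℝ V] [FiniteDimensional ℝ V]

theorem eq_zero_of_smul_add_smul_eq_zero {K M W : Type*} [DivisionRing K] [NeZero (2 : K)]
    [AddCommMonoid W] [Module K W] {A : M → K} (hA : A ≠ 0) {F : M → W}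
    (h : ∀ x y, A x • F y + A y • F x = 0) : F = 0 := by
  obtain ⟨v, hv⟩ : ∃ v, A v ≠ 0 := by simpa [funext_iff] using hA
  have hFv : F v = 0 := by
    have h2 : (2 * A v) • F v = 0 := by rw [two_mul, add_smul]; exact h v v
    exact (smul_eq_zero.mp h2).resolve_left (mul_ne_zero two_ne_zero hv)
  funext x
  have hx := h x v
  rw [hFv, smul_zero, zero_add] at hx
  exact (smul_eq_zero.mp hx).resolve_left hv

theorem extended_ws_lemma31_pointwise_general
    (R : V →ₗ[ℝ] V →ₗ[ℝ] V →ₗ[ℝ] V →ₗ[ℝ] ℝ)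
    (A : V →ₗ[ℝ] ℝ) (hA : A ≠ 0)
    (h : ∀ x1 x2 x3 x4 x5 : V,
      A x1 * R x2 x5 x3 x4 + A x2 * R x1 x5 x3 x4 = 0) :
    R = 0 := by
  have hA' : ⇑A ≠ 0 := fun hA0 => hA (DFunLike.coe_injective hA0)
  have hR : ⇑R = 0 := eq_zero_of_smul_add_smul_eq_zero (F := ⇑R) hA' fun x y => by
    ext z u w
    simpa using h x y u w z
  exact DFunLike.coe_injective hR

/-- Algebraic pointwise version of Lemma 3.1: if a nonzero 1-form `A` satisfies
`A(X₁)R(X₂,X₅,X₃,X₄) + A(X₂)R(X₁,X₅,X₃,X₄) = 0`, then `R = 0`. -/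
theorem extended_ws_lemma31_pointwise
    (R : V →ₗ[ℝ] V →ₗ[ℝ] V →ₗ[ℝ] V →ₗ[ℝ] ℝ) (hR : IsACT R)
    (A : V →ₗ[ℝ] ℝ) (hA : A ≠ 0)
    (h : ∀ x1 x2 x3 x4 x5 : V,
      A x1 * R x2 x5 x3 x4 + A x2 * R x1 x5 x3 x4 = 0) :
    R = 0 :=
  extended_ws_lemma31_pointwise_general R A hA h
end
end
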